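/- arXiv:2401.18023 — 2 statements merged into one kernel-verified Lean document; each statement's English description precedes it below -/
import Mathlib

section
/- Let (Y, X) be a random vector with X absolutely continuous (P(Xᵀu = 0) = 0 for u ≠ 0), E[‖X‖²] < ∞, E[Y²] < ∞, E[‖YX‖] < ∞, let A be a fixed matrix, λ ≥ 0, and B ⊆ ℝ^{p+1} nonempty closed convex. Then the problem min_{β ∈ B} E[(Y − Xᵀβ)² + λ‖Aβ‖₁] has a unique optimal solution. -/
/-! For `a + b = 1` the squared risk `R β = E[(Y - ⟪X, β⟫)²]` satisfies
`R (a • β + b • γ) = a R β + b R γ - a b E[⟪X, β - γ⟫²]`, and the last expectation is positive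
for `β ≠ γ` because `X` charges no hyperplane; so the objective is strictly convex, hence
continuous. The quadratic form `E[⟪X, u⟫²]` is at least `c ‖u‖²`, `c > 0` being its minimum on
the unit sphere, and `(Y - t)² ≥ t² / 2 - Y²` then makes the objective coercive. A continuous
coercive function attains its minimum on a nonempty closed set, and a strictly convex one has at
most one minimiser on a convex set. -/

open MeasureTheory Matrix Set Filter Topology RealInnerProductSpace

lemma convexOn_sum_abs_mulVec {m n : Type*} [Fintype m] [Fintype n] (A : Matrix m n ℝ) :
    ConvexOn ℝ univ (fun β : EuclideanSpace ℝ n => ∑ i, |(A *ᵥ β) i|) := by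
  refine ⟨convex_univ, fun x _ y _ a b ha hb _ => ?_⟩
  simp only [WithLp.ofLp_add, WithLp.ofLp_smul, mulVec_add, mulVec_smul, smul_eq_mul,
    Pi.add_apply, Pi.smul_apply, Finset.mul_sum, ← Finset.sum_add_distrib]
  refine Finset.sum_le_sum fun i _ => (abs_add_le _ _).trans_eq ?_
  rw [abs_mul, abs_mul, abs_of_nonneg ha, abs_of_nonneg hb]

lemma exists_unique_isMinOn_of_strictConvexOn {F : Type*} [NormedAddCommGroup F]
    [NormedSpace ℝ F] [FiniteDimensional ℝ F] {f : F → ℝ} (hf : StrictConvexOn ℝ univ f)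
    (hcoer : Tendsto f (cocompact F) atTop) {s : Set F} (hne : s.Nonempty) (hclosed : IsClosed s)
    (hconv : Convex ℝ s) :
    ∃! x, x ∈ s ∧ IsMinOn f s x := by
  obtain ⟨x₀, hx₀⟩ := hne
  obtain ⟨x, hxs, hxmin⟩ := ((hf.convexOn.continuousOn isOpen_univ).mono (subset_univ s))
    |>.exists_isMinOn' hclosed hx₀
      ((hcoer.eventually_ge_atTop (f x₀)).filter_mono inf_le_left)
  exact ⟨x, ⟨hxs, hxmin⟩, fun y ⟨hys, hymin⟩ =>
    (hf.subset (subset_univ s) hconv).eq_of_isMinOn hymin hxmin hys hxs⟩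

lemma exists_pos_mul_norm_sq_le {F : Type*} [NormedAddCommGroup F] [NormedSpace ℝ F]
    [FiniteDimensional ℝ F] {Q : F → ℝ} (hQc : Continuous Q) (hQpos : ∀ u, u ≠ 0 → 0 < Q u)
    (hQhom : ∀ (t : ℝ) u, Q (t • u) = t ^ 2 * Q u) :
    ∃ c > 0, ∀ u, c * ‖u‖ ^ 2 ≤ Q u := by
  have hQ0 : Q 0 = 0 := by simpa using hQhom 0 0
  rcases subsingleton_or_nontrivial F with _ | _
  · exact ⟨1, one_pos, fun u => by simp [Subsingleton.elim u 0, hQ0]⟩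
  obtain ⟨u₀, hu₀, hmin⟩ := (isCompact_sphere (0 : F) 1).exists_isMinOn
    (NormedSpace.sphere_nonempty.mpr zero_le_one) hQc.continuousOn
  have hu₀1 : ‖u₀‖ = 1 := mem_sphere_zero_iff_norm.mp hu₀
  refine ⟨Q u₀, hQpos u₀ (norm_ne_zero_iff.mp (by simp [hu₀1])), fun u => ?_⟩
  rcases eq_or_ne u 0 with rfl | hu
  · simp [hQ0]
  have hnu : ‖u‖ ≠ 0 := norm_ne_zero_iff.mpr hu
  calc Q u₀ * ‖u‖ ^ 2 ≤ Q (‖u‖⁻¹ • u) * ‖u‖ ^ 2 := by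
        gcongr
        exact hmin (by simp [norm_smul, hnu])
    _ = Q u := by rw [mul_comm, ← hQhom, smul_inv_smul₀ hnu]

section Risk

variable {Ω E : Type*} [MeasurableSpace Ω] {μ : Measure Ω}
  [NormedAddCommGroup E] [InnerProductSpace ℝ E] {Y : Ω → ℝ} {X : Ω → E}

noncomputable def squaredRisk (μ : Measure Ω) (Y : Ω → ℝ) (X : Ω → E) (β : E) : ℝ :=
  ∫ ω, (Y ω - ⟪X ω, β⟫) ^ 2 ∂μ

lemma integrable_inner_sq (hX : AEStronglyMeasurable X μ)
    (hX2 : Integrable (fun ω => ‖X ω‖ ^ 2) μ) (β : E) :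
    Integrable (fun ω => ⟪X ω, β⟫ ^ 2) μ := by
  refine (hX2.mul_const (‖β‖ ^ 2)).mono' ((hX.inner aestronglyMeasurable_const).pow 2) ?_
  filter_upwards with ω
  rw [Real.norm_eq_abs, abs_pow, ← mul_pow]
  exact pow_le_pow_left₀ (abs_nonneg _) (abs_real_inner_le_norm _ _) 2

lemma integrable_sq_sub_inner (hY : AEStronglyMeasurable Y μ) (hX : AEStronglyMeasurable X μ)
    (hY2 : Integrable (fun ω => Y ω ^ 2) μ) (hX2 : Integrable (fun ω => ‖X ω‖ ^ 2) μ) (β : E) :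
    Integrable (fun ω => (Y ω - ⟪X ω, β⟫) ^ 2) μ := by
  refine ((hY2.add (integrable_inner_sq hX hX2 β)).const_mul 2).mono'
    ((hY.sub (hX.inner aestronglyMeasurable_const)).pow 2) ?_
  filter_upwards with ω
  rw [Real.norm_eq_abs, abs_sq, Pi.add_apply]
  nlinarith [sq_nonneg (Y ω + ⟪X ω, β⟫)]

lemma squaredRisk_smul_add_smul (hY : AEStronglyMeasurable Y μ) (hX : AEStronglyMeasurable X μ)
    (hY2 : Integrable (fun ω => Y ω ^ 2) μ) (hX2 : Integrable (fun ω => ‖X ω‖ ^ 2) μ)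
    (β γ : E) {a b : ℝ} (hab : a + b = 1) :
    squaredRisk μ Y X (a • β + b • γ) =
      a * squaredRisk μ Y X β + b * squaredRisk μ Y X γ - a * b * ∫ ω, ⟪X ω, β - γ⟫ ^ 2 ∂μ := by
  have hpt : ∀ ω, (Y ω - ⟪X ω, a • β + b • γ⟫) ^ 2 =
      a * (Y ω - ⟪X ω, β⟫) ^ 2 + b * (Y ω - ⟪X ω, γ⟫) ^ 2 - a * b * ⟪X ω, β - γ⟫ ^ 2 := by
    intro ω
    rw [inner_add_right, real_inner_smul_right, real_inner_smul_right, inner_sub_right,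
      eq_sub_of_add_eq hab]
    ring
  have hβ := (integrable_sq_sub_inner hY hX hY2 hX2 β).const_mul a
  have hγ := (integrable_sq_sub_inner hY hX hY2 hX2 γ).const_mul b
  have hβγ : Integrable (fun ω => a * (Y ω - ⟪X ω, β⟫) ^ 2 + b * (Y ω - ⟪X ω, γ⟫) ^ 2) μ :=
    hβ.add hγ
  simp only [squaredRisk, hpt]
  rw [integral_sub hβγ ((integrable_inner_sq hX hX2 _).const_mul _),
    integral_add hβ hγ, integral_const_mul, integral_const_mul, integral_const_mul]

lemma integral_inner_sq_pos [NeZero μ] (hX : AEStronglyMeasurable X μ)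
    (hX2 : Integrable (fun ω => ‖X ω‖ ^ 2) μ) {u : E} (hu : μ {ω | ⟪X ω, u⟫ = 0} = 0) :
    0 < ∫ ω, ⟪X ω, u⟫ ^ 2 ∂μ := by
  rw [integral_pos_iff_support_of_nonneg_ae (ae_of_all _ fun ω => sq_nonneg _)
    (integrable_inner_sq hX hX2 u)]
  have hsupp : Function.support (fun ω => ⟪X ω, u⟫ ^ 2) = {ω | ⟪X ω, u⟫ = 0}ᶜ := by
    ext ω; simp
  rw [hsupp, pos_iff_ne_zero]
  intro hc
  refine NeZero.ne μ (Measure.measure_univ_eq_zero.mp (le_antisymm ?_ bot_le))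
  simpa [hu, hc] using measure_univ_le_add_compl {ω | ⟪X ω, u⟫ = 0} (μ := μ)

lemma strictConvexOn_squaredRisk [NeZero μ] (hY : AEStronglyMeasurable Y μ)
    (hX : AEStronglyMeasurable X μ) (hY2 : Integrable (fun ω => Y ω ^ 2) μ)
    (hX2 : Integrable (fun ω => ‖X ω‖ ^ 2) μ)
    (hXnondeg : ∀ u : E, u ≠ 0 → μ {ω | ⟪X ω, u⟫ = 0} = 0) :
    StrictConvexOn ℝ univ (squaredRisk μ Y X) := by
  refine ⟨convex_univ, fun β _ γ _ hne a b ha hb hab => ?_⟩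
  have hQ := integral_inner_sq_pos hX hX2 (hXnondeg _ (sub_ne_zero.mpr hne))
  rw [squaredRisk_smul_add_smul hY hX hY2 hX2 β γ hab, smul_eq_mul, smul_eq_mul]
  nlinarith [mul_pos (mul_pos ha hb) hQ]

lemma tendsto_squaredRisk_cocompact [FiniteDimensional ℝ E] [NeZero μ]
    (hY : AEStronglyMeasurable Y μ) (hX : AEStronglyMeasurable X μ)
    (hY2 : Integrable (fun ω => Y ω ^ 2) μ) (hX2 : Integrable (fun ω => ‖X ω‖ ^ 2) μ)
    (hXnondeg : ∀ u : E, u ≠ 0 → μ {ω | ⟪X ω, u⟫ = 0} = 0) :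
    Tendsto (squaredRisk μ Y X) (cocompact E) atTop := by
  -- The quadratic form is the risk of the zero response, so it is convex, hence continuous.
  have hQ : ∀ u, squaredRisk μ 0 X u = ∫ ω, ⟪X ω, u⟫ ^ 2 ∂μ := by simp [squaredRisk]
  obtain ⟨c, hc, hcQ⟩ := exists_pos_mul_norm_sq_le
    (continuousOn_univ.mp <| (strictConvexOn_squaredRisk (Y := 0) aestronglyMeasurable_const
      hX (by simp) hX2 hXnondeg).convexOn.continuousOn isOpen_univ)
    (fun u hu => (hQ u).symm ▸ integral_inner_sq_pos hX hX2 (hXnondeg u hu))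
    (fun t u => by simp only [hQ, real_inner_smul_right, mul_pow, integral_const_mul])
  have hlower : ∀ β, c / 2 * ‖β‖ ^ 2 - ∫ ω, Y ω ^ 2 ∂μ ≤ squaredRisk μ Y X β := by
    intro β
    have hβ := hcQ β
    rw [hQ] at hβ
    calc c / 2 * ‖β‖ ^ 2 - ∫ ω, Y ω ^ 2 ∂μ
        ≤ ∫ ω, ⟪X ω, β⟫ ^ 2 / 2 - Y ω ^ 2 ∂μ := by
          rw [integral_sub ((integrable_inner_sq hX hX2 β).div_const 2) hY2, integral_div]
          linarith
      _ ≤ squaredRisk μ Y X β := by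
          refine integral_mono (((integrable_inner_sq hX hX2 β).div_const 2).sub hY2)
            (integrable_sq_sub_inner hY hX hY2 hX2 β) fun ω => ?_
          nlinarith [sq_nonneg (Y ω - ⟪X ω, β⟫ / 2)]
  refine tendsto_atTop_mono hlower ?_
  exact tendsto_atTop_add_const_right _ _
    (((tendsto_pow_atTop two_ne_zero).comp tendsto_norm_cocompact_atTop).const_mul_atTop
      (half_pos hc))

end Risk

theorem true_csclasso_unique_optimal_solution_general
    {Ω : Type*} [MeasurableSpace Ω] (μ : Measure Ω) [IsProbabilityMeasure μ]
    (p q : ℕ) (Y : Ω → ℝ) (X : Ω → EuclideanSpace ℝ (Fin (p + 1)))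
    (hYmeas : Measurable Y) (hXmeas : Measurable X)
    (habs : ∀ u : EuclideanSpace ℝ (Fin (p + 1)), u ≠ 0 →
      μ {ω | ∑ i, X ω i * u i = 0} = 0)
    (hX2 : Integrable (fun ω => ‖X ω‖ ^ 2) μ)
    (hY2 : Integrable (fun ω => (Y ω) ^ 2) μ)
    (A : Matrix (Fin q) (Fin (p + 1)) ℝ) (lam : ℝ) (hlam : 0 ≤ lam)
    (B : Set (EuclideanSpace ℝ (Fin (p + 1))))
    (hBne : B.Nonempty) (hBclosed : IsClosed B) (hBconv : Convex ℝ B) :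
    ∃! β₀ : EuclideanSpace ℝ (Fin (p + 1)), β₀ ∈ B ∧
      ∀ β ∈ B,
        (∫ ω, ((Y ω - ∑ j, X ω j * β₀ j) ^ 2 + lam * ∑ i, |A.mulVec β₀ i|) ∂μ) ≤
          ∫ ω, ((Y ω - ∑ j, X ω j * β j) ^ 2 + lam * ∑ i, |A.mulVec β i|) ∂μ := by
  have hdot : ∀ x u : EuclideanSpace ℝ (Fin (p + 1)), ∑ i, x i * u i = ⟪x, u⟫ := fun x u => by
    rw [real_inner_comm, EuclideanSpace.inner_eq_star_dotProduct]; rfl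
  have hY := hYmeas.aestronglyMeasurable (μ := μ)
  have hX := hXmeas.aestronglyMeasurable (μ := μ)
  have hnondeg : ∀ u, u ≠ 0 → μ {ω | ⟪X ω, u⟫ = 0} = 0 := fun u hu => by
    simpa only [hdot] using habs u hu
  set F := fun β : EuclideanSpace ℝ (Fin (p + 1)) =>
    squaredRisk μ Y X β + lam * ∑ i, |(A *ᵥ β) i|
  have hF : ∀ β : EuclideanSpace ℝ (Fin (p + 1)),
      ∫ ω, ((Y ω - ∑ j, X ω j * β j) ^ 2 + lam * ∑ i, |(A *ᵥ β) i|) ∂μ = F β := fun β => by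
    simp only [hdot]
    rw [integral_add (integrable_sq_sub_inner hY hX hY2 hX2 β) (integrable_const _),
      integral_const, probReal_univ, one_smul]
    rfl
  have hFconv : StrictConvexOn ℝ univ F :=
    (strictConvexOn_squaredRisk hY hX hY2 hX2 hnondeg).add_convexOn
      ((convexOn_sum_abs_mulVec A).smul hlam)
  have hFcoer : Tendsto F (cocompact _) atTop :=
    tendsto_atTop_mono (fun β => le_add_of_nonneg_right (mul_nonneg hlam
      (Finset.sum_nonneg fun i _ => abs_nonneg _)))
      (tendsto_squaredRisk_cocompact hY hX hY2 hX2 hnondeg)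
  simpa only [hF, isMinOn_iff] using
    exists_unique_isMinOn_of_strictConvexOn hFconv hFcoer hBne hBclosed hBconv

theorem true_csclasso_unique_optimal_solution
    {Ω : Type*} [MeasurableSpace Ω] (μ : Measure Ω) [IsProbabilityMeasure μ]
    (p q : ℕ) (Y : Ω → ℝ) (X : Ω → EuclideanSpace ℝ (Fin (p + 1)))
    (hYmeas : Measurable Y) (hXmeas : Measurable X)
    (habs : ∀ u : EuclideanSpace ℝ (Fin (p + 1)), u ≠ 0 →
      μ {ω | ∑ i, X ω i * u i = 0} = 0)
    (hX2 : Integrable (fun ω => ‖X ω‖ ^ 2) μ)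
    (hY2 : Integrable (fun ω => (Y ω) ^ 2) μ)
    (hYX : Integrable (fun ω => ‖Y ω • X ω‖) μ)
    (A : Matrix (Fin q) (Fin (p + 1)) ℝ) (lam : ℝ) (hlam : 0 ≤ lam)
    (B : Set (EuclideanSpace ℝ (Fin (p + 1))))
    (hBne : B.Nonempty) (hBclosed : IsClosed B) (hBconv : Convex ℝ B) :
    ∃! β₀ : EuclideanSpace ℝ (Fin (p + 1)), β₀ ∈ B ∧
      ∀ β ∈ B,
        (∫ ω, ((Y ω - ∑ j, X ω j * β₀ j) ^ 2 + lam * ∑ i, |A.mulVec β₀ i|) ∂μ) ≤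
          ∫ ω, ((Y ω - ∑ j, X ω j * β j) ^ 2 + lam * ∑ i, |A.mulVec β i|) ∂μ :=
  true_csclasso_unique_optimal_solution_general μ p q Y X hYmeas hXmeas habs hX2 hY2 A lam hlam B
    hBne hBclosed hBconv
end

section
/- Let B ⊆ ℝ^{p+1} be nonempty closed convex, X full column rank, and for λ ≥ 0 let β̂(λ) be the unique minimizer over B of f_λ(β) = (1/n)‖y − Xβ‖² + λ‖Aβ‖₁. Suppose β^∞ is a minimizer over B of ‖Aβ‖₁ that additionally minimizes (1/n)‖y − Xβ‖² among all minimizers of ‖Aβ‖₁ over B. Then ‖Aβ̂(λ)‖₁ → ‖Aβ^∞‖₁ as λ → +∞. -/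
open Matrix Filter Topology

/-!
Testing the penalized objective at `βinf` gives `λ ‖A β̂(λ)‖₁ ≤ (1/n)‖y - X βinf‖² + λ ‖A βinf‖₁`,
since the loss at `β̂(λ)` is nonnegative. Hence
`‖A βinf‖₁ ≤ ‖A β̂(λ)‖₁ ≤ ‖A βinf‖₁ + O(1/λ)`, and the claim follows by squeezing.
-/

section PenaltyPath

variable {α : Type*} {S : Set α} {f g : α → ℝ} {m : ℝ}

theorem penalty_le_add_div_of_isMinOn {lam : ℝ} {x z₀ : α} (hf : ∀ z ∈ S, m ≤ f z)
    (hlam : 0 < lam) (hx : x ∈ S) (hxmin : IsMinOn (fun z => f z + lam * g z) S x)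
    (hz₀ : z₀ ∈ S) : g x ≤ g z₀ + (f z₀ - m) / lam := by
  have hcompare : f x + lam * g x ≤ f z₀ + lam * g z₀ := isMinOn_iff.mp hxmin z₀ hz₀
  have hloss : m ≤ f x := hf x hx
  rw [← sub_le_iff_le_add', le_div_iff₀ hlam]
  linarith

theorem tendsto_penalty_of_isMinOn {z₀ : α} (hf : ∀ z ∈ S, m ≤ f z) (x : ℝ → α)
    (hx : ∀ᶠ lam in atTop, x lam ∈ S ∧ IsMinOn (fun z => f z + lam * g z) S (x lam))
    (hz₀ : z₀ ∈ S) (hz₀min : IsMinOn g S z₀) :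
    Tendsto (fun lam => g (x lam)) atTop (𝓝 (g z₀)) := by
  have hupper : Tendsto (fun lam : ℝ => g z₀ + (f z₀ - m) / lam) atTop (𝓝 (g z₀)) := by
    simpa using tendsto_const_nhds.add (tendsto_id.const_div_atTop (f z₀ - m))
  refine tendsto_of_tendsto_of_tendsto_of_le_of_le' tendsto_const_nhds hupper ?_ ?_
  · filter_upwards [hx] with lam ⟨hxS, _⟩
    exact isMinOn_iff.mp hz₀min _ hxS
  · filter_upwards [hx, eventually_gt_atTop 0] with lam ⟨hxS, hxmin⟩ hlam
    exact penalty_le_add_div_of_isMinOn hf hlam hxS hxmin hz₀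

end PenaltyPath

theorem penalty_value_limit_general
    (n p q : ℕ) (y : EuclideanSpace ℝ (Fin n))
    (X : Matrix (Fin n) (Fin (p + 1)) ℝ)
    (A : Matrix (Fin q) (Fin (p + 1)) ℝ)
    (B : Set (EuclideanSpace ℝ (Fin (p + 1))))
    (βhat : ℝ → EuclideanSpace ℝ (Fin (p + 1)))
    (hβhat : ∀ lam : ℝ, 0 ≤ lam →
      βhat lam ∈ B ∧
      (∀ β ∈ B,
        (1 / (n : ℝ)) * ‖y - (show EuclideanSpace ℝ (Fin n) from WithLp.toLp 2 (X.mulVec (βhat lam)))‖ ^ 2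
            + lam * ∑ i, |A.mulVec (βhat lam) i| ≤
          (1 / (n : ℝ)) * ‖y - (show EuclideanSpace ℝ (Fin n) from WithLp.toLp 2 (X.mulVec β))‖ ^ 2
            + lam * ∑ i, |A.mulVec β i|) ∧
      (∀ β ∈ B,
        (∀ β' ∈ B,
          (1 / (n : ℝ)) * ‖y - (show EuclideanSpace ℝ (Fin n) from WithLp.toLp 2 (X.mulVec β))‖ ^ 2
              + lam * ∑ i, |A.mulVec β i| ≤
            (1 / (n : ℝ)) * ‖y - (show EuclideanSpace ℝ (Fin n) from WithLp.toLp 2 (X.mulVec β'))‖ ^ 2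
              + lam * ∑ i, |A.mulVec β' i|) → β = βhat lam))
    (βinf : EuclideanSpace ℝ (Fin (p + 1)))
    (hβinfB : βinf ∈ B)
    (hβinfmin : ∀ β ∈ B, ∑ i, |A.mulVec βinf i| ≤ ∑ i, |A.mulVec β i|) :
    Tendsto (fun lam => ∑ i, |A.mulVec (βhat lam) i|) atTop
      (nhds (∑ i, |A.mulVec βinf i|)) := by
  let loss : EuclideanSpace ℝ (Fin (p + 1)) → ℝ := fun β =>
    (1 / (n : ℝ)) * ‖y - (show EuclideanSpace ℝ (Fin n) from WithLp.toLp 2 (X.mulVec β))‖ ^ 2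
  let penalty : EuclideanSpace ℝ (Fin (p + 1)) → ℝ := fun β => ∑ i, |A.mulVec β i|
  have hpath : ∀ᶠ lam in atTop,
      βhat lam ∈ B ∧ IsMinOn (fun β => loss β + lam * penalty β) B (βhat lam) := by
    filter_upwards [eventually_ge_atTop 0] with lam hlam
    exact ⟨(hβhat lam hlam).1, isMinOn_iff.mpr (hβhat lam hlam).2.1⟩
  exact tendsto_penalty_of_isMinOn (m := 0) (fun β _ => by positivity) βhat hpath hβinfB
    (isMinOn_iff.mpr hβinfmin)

theorem penalty_value_limit
    (n p q : ℕ) (y : EuclideanSpace ℝ (Fin n))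
    (X : Matrix (Fin n) (Fin (p + 1)) ℝ) (hX : X.rank = p + 1)
    (A : Matrix (Fin q) (Fin (p + 1)) ℝ)
    (B : Set (EuclideanSpace ℝ (Fin (p + 1))))
    (hBne : B.Nonempty) (hBclosed : IsClosed B) (hBconv : Convex ℝ B)
    (βhat : ℝ → EuclideanSpace ℝ (Fin (p + 1)))
    (hβhat : ∀ lam : ℝ, 0 ≤ lam →
      βhat lam ∈ B ∧
      (∀ β ∈ B,
        (1 / (n : ℝ)) * ‖y - (show EuclideanSpace ℝ (Fin n) from WithLp.toLp 2 (X.mulVec (βhat lam)))‖ ^ 2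
            + lam * ∑ i, |A.mulVec (βhat lam) i| ≤
          (1 / (n : ℝ)) * ‖y - (show EuclideanSpace ℝ (Fin n) from WithLp.toLp 2 (X.mulVec β))‖ ^ 2
            + lam * ∑ i, |A.mulVec β i|) ∧
      (∀ β ∈ B,
        (∀ β' ∈ B,
          (1 / (n : ℝ)) * ‖y - (show EuclideanSpace ℝ (Fin n) from WithLp.toLp 2 (X.mulVec β))‖ ^ 2
              + lam * ∑ i, |A.mulVec β i| ≤
            (1 / (n : ℝ)) * ‖y - (show EuclideanSpace ℝ (Fin n) from WithLp.toLp 2 (X.mulVec β'))‖ ^ 2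
              + lam * ∑ i, |A.mulVec β' i|) → β = βhat lam))
    (βinf : EuclideanSpace ℝ (Fin (p + 1)))
    (hβinfB : βinf ∈ B)
    (hβinfmin : ∀ β ∈ B, ∑ i, |A.mulVec βinf i| ≤ ∑ i, |A.mulVec β i|)
    (hβinfq : ∀ β ∈ B, (∀ β' ∈ B, ∑ i, |A.mulVec β i| ≤ ∑ i, |A.mulVec β' i|) →
      (1 / (n : ℝ)) * ‖y - (show EuclideanSpace ℝ (Fin n) from WithLp.toLp 2 (X.mulVec βinf))‖ ^ 2 ≤
        (1 / (n : ℝ)) * ‖y - (show EuclideanSpace ℝ (Fin n) from WithLp.toLp 2 (X.mulVec β))‖ ^ 2) :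
    Tendsto (fun lam => ∑ i, |A.mulVec (βhat lam) i|) atTop
      (nhds (∑ i, |A.mulVec βinf i|)) :=
  penalty_value_limit_general n p q y X A B βhat hβhat βinf hβinfB hβinfmin
end
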